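/- arXiv:2511.00583 — 2 statements merged into one kernel-verified Lean document; each statement's English description precedes it below -/
import Mathlib

section
/- Viewing z² − z + 1 and f(z,w) as polynomials in z over ℤ[w] (of degrees 2 and 3 respectively), one has Res_z( z² − z + 1, f(z,w) ) = (w³ − 6w² + 3w + 1)². -/
open Polynomial

/-- The Sylvester matrix of two polynomials `p`, `q` (with respect to their
natural degrees): the first `q.natDegree` rows contain the coefficients of `p`
in descending order, the remaining `p.natDegree` rows those of `q`. -/
noncomputable def sylvester {R : Type*} [CommRing R] (p q : R[X]) :
    Matrix (Fin (p.natDegree + q.natDegree)) (Fin (p.natDegree + q.natDegree)) R :=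
  Matrix.of fun i j =>
    if (i : ℕ) < q.natDegree then
      (if (i : ℕ) ≤ (j : ℕ) ∧ (j : ℕ) ≤ p.natDegree + (i : ℕ) then
        p.coeff (p.natDegree + (i : ℕ) - (j : ℕ)) else 0)
    else
      (if (i : ℕ) - q.natDegree ≤ (j : ℕ) ∧ (j : ℕ) ≤ q.natDegree + ((i : ℕ) - q.natDegree) then
        q.coeff (q.natDegree + ((i : ℕ) - q.natDegree) - (j : ℕ)) else 0)

/-- The resultant of two polynomials, i.e. the determinant of their Sylvester matrix. -/
noncomputable def resultant {R : Type*} [CommRing R] (p q : R[X]) : R :=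
  (_root_.sylvester p q).det

/-- `f(z,w) = w³ + (−z³+6z²−6z−1)w² + (z³−3z²+3z+1)w − z³`. -/
def fpoly {R : Type*} [CommRing R] (z w : R) : R :=
  w ^ 3 + (-z ^ 3 + 6 * z ^ 2 - 6 * z - 1) * w ^ 2 + (z ^ 3 - 3 * z ^ 2 + 3 * z + 1) * w - z ^ 3


/-!
Modulo `z² − z + 1` one has `z³ ≡ −1` and `z² ≡ z − 1`, so `f(z,w)` reduces to the constant
`c(w) = w³ − 6w² + 3w + 1` (as a polynomial in `z`). The resultant is unchanged when a multiple
of the first argument is added to the second, so `Res_z(z² − z + 1, f) = Res_z(z² − z + 1, c)`,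
and the resultant of a monic quadratic and a constant `c` is `c²`. The Sylvester matrix used
here is Mathlib's one with rows and columns reversed and transposed, so the two resultants agree.
-/

theorem sylvester_eq_transpose_submatrix_rev {R : Type*} [CommRing R] (p q : R[X]) :
    _root_.sylvester p q =
      ((Polynomial.sylvester p q p.natDegree q.natDegree).submatrix Fin.rev Fin.rev).transpose := by
  ext i j
  obtain ⟨i, rfl⟩ := Fin.rev_surjective i
  induction i using Fin.addCases <;>
    simp only [_root_.sylvester, Polynomial.sylvester, Matrix.transpose_apply,
      Matrix.submatrix_apply, Matrix.of_apply, Set.mem_Icc, Fin.rev_rev, Fin.addCases_left,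
      Fin.addCases_right, Fin.val_rev, Fin.val_castAdd, Fin.val_natAdd] <;>
    split_ifs <;> first | rfl | omega | (congr 1; omega)

theorem resultant_eq_polynomial_resultant {R : Type*} [CommRing R] (p q : R[X]) :
    _root_.resultant p q = Polynomial.resultant p q := by
  rw [_root_.resultant, Polynomial.resultant, sylvester_eq_transpose_submatrix_rev,
    Matrix.det_transpose]
  exact Matrix.det_submatrix_equiv_self Fin.revPerm _

theorem natDegree_X_sq_sub_X_add_one {R : Type*} [Ring R] [Nontrivial R] :
    ((X : R[X]) ^ 2 - X + 1).natDegree = 2 := by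
  compute_degree!

theorem fpoly_X_C_eq {R : Type*} [CommRing R] (w : R) :
    fpoly (X : R[X]) (C w) = C (w ^ 3 - 6 * w ^ 2 + 3 * w + 1) +
      (X ^ 2 - X + 1) * ((5 - X) * C w ^ 2 + (X - 2) * C w - (X + 1)) := by
  simp only [fpoly, map_add, map_sub, map_mul, map_pow, map_ofNat, map_one]
  ring

theorem natDegree_fpoly_X_C_X : (fpoly (X : (ℤ[X])[X]) (C X)).natDegree = 3 := by
  unfold fpoly
  compute_degree!
  intro h
  simpa using congrArg (coeff · 0) h

/-- Viewing `z² − z + 1` and `f(z,w)` as polynomials in `z` over `ℤ[w]` (so below the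
outer variable is `z` and the inner variable is `w`),
`Res_z(z² − z + 1, f(z,w)) = (w³ − 6w² + 3w + 1)²`. -/
theorem statement7 :
    _root_.resultant ((Polynomial.X : Polynomial (Polynomial ℤ)) ^ 2 - Polynomial.X + 1)
      (fpoly Polynomial.X (Polynomial.C (Polynomial.X : Polynomial ℤ))) =
    ((Polynomial.X : Polynomial ℤ) ^ 3 - 6 * Polynomial.X ^ 2 + 3 * Polynomial.X + 1) ^ 2 := by
  have hp := natDegree_X_sq_sub_X_add_one (R := ℤ[X])
  have hquot : ((5 - X) * C X ^ 2 + (X - 2) * C X - (X + 1) : (ℤ[X])[X]).natDegree + 2 ≤ 3 := by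
    have : ((5 - X) * C X ^ 2 + (X - 2) * C X - (X + 1) : (ℤ[X])[X]).natDegree ≤ 1 := by
      compute_degree!
    omega
  rw [resultant_eq_polynomial_resultant, natDegree_fpoly_X_C_X, hp, fpoly_X_C_eq,
    resultant_add_mul_right _ _ _ _ _ hquot hp.le, resultant_C_right]
  simp [coeff_X, coeff_one]
end

section
/- Viewing f(z,w) as a monic cubic polynomial in w over ℤ[z], the resultant of f with its w-derivative satisfies Res_w( f(z,w), ∂f/∂w (z,w) ) = 3(z³ − 3z² + 1)²(z³ − 6z² + 3z + 1)²; equivalently, the discriminant of f(z,w) as a cubic in w equals −3(z³ − 3z² + 1)²(z³ − 6z² + 3z + 1)². -/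
open Polynomial

/-!
For a monic cubic `w³ + a w² + b w + c`, the Sylvester matrix of the cubic and its derivative
is `5 × 5`, and expanding its determinant gives `4b³ + 27c² − 18abc + 4a³c − a²b²`, i.e. minus
the discriminant. Substituting the coefficients of `f` as polynomials in `z`, the claim becomes a
polynomial identity in `z`.
-/

section CubicQuadratic

variable {R : Type*} [CommRing R]

theorem resultant_eq_det_of_natDegree_eq_three_two {p q : R[X]} (hp : p.natDegree = 3)
    (hq : q.natDegree = 2) :
    _root_.resultant p q =
      !![p.coeff 3, p.coeff 2, p.coeff 1, p.coeff 0, 0;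
         0, p.coeff 3, p.coeff 2, p.coeff 1, p.coeff 0;
         q.coeff 2, q.coeff 1, q.coeff 0, 0, 0;
         0, q.coeff 2, q.coeff 1, q.coeff 0, 0;
         0, 0, q.coeff 2, q.coeff 1, q.coeff 0].det := by
  have hd : p.natDegree + q.natDegree = 5 := by rw [hp, hq]
  rw [_root_.resultant, ← Matrix.det_submatrix_equiv_self (finCongr hd.symm)]
  congr 1
  ext i j
  fin_cases i <;> fin_cases j <;> simp [_root_.sylvester, hp, hq]

theorem det_sylvester_three_two (a₀ a₁ a₂ a₃ b₀ b₁ b₂ : R) :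
    !![a₃, a₂, a₁, a₀, 0;
       0, a₃, a₂, a₁, a₀;
       b₂, b₁, b₀, 0, 0;
       0, b₂, b₁, b₀, 0;
       0, 0, b₂, b₁, b₀].det =
      a₀^2*b₂^3 - a₀*a₁*b₁*b₂^2 - 2*a₀*a₂*b₀*b₂^2 + a₀*a₂*b₁^2*b₂ + 3*a₀*a₃*b₀*b₁*b₂
      - a₀*a₃*b₁^3 + a₁^2*b₀*b₂^2 - a₁*a₂*b₀*b₁*b₂ - 2*a₁*a₃*b₀^2*b₂ + a₁*a₃*b₀*b₁^2
      + a₂^2*b₀^2*b₂ - a₂*a₃*b₀^2*b₁ + a₃^2*b₀^3 := by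
  simp [Matrix.det_succ_row_zero, Fin.sum_univ_succ, Fin.succAbove]
  ring

theorem resultant_derivative_cubic (h3 : (3 : R) ≠ 0) (a b c : R) :
    _root_.resultant (X ^ 3 + C a * X ^ 2 + C b * X + C c)
        (derivative (X ^ 3 + C a * X ^ 2 + C b * X + C c)) =
      4 * b ^ 3 + 27 * c ^ 2 - 18 * a * b * c + 4 * a ^ 3 * c - a ^ 2 * b ^ 2 := by
  have : Nontrivial R := ⟨⟨3, 0, h3⟩⟩
  have hd : derivative (X ^ 3 + C a * X ^ 2 + C b * X + C c) =
      C 3 * X ^ 2 + C (2 * a) * X + C b := by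
    simp only [derivative_add, derivative_C_mul, derivative_X_pow, derivative_X, derivative_C,
      map_mul, map_ofNat, Nat.cast_ofNat]
    ring
  rw [hd, resultant_eq_det_of_natDegree_eq_three_two (by compute_degree!) (by compute_degree!),
    det_sylvester_three_two]
  simp only [coeff_add, coeff_C_mul, coeff_X_pow, coeff_X, coeff_C, Nat.reduceEqDiff, ↓reduceIte]
  ring

end CubicQuadratic

theorem fpoly_C_X {R : Type*} [CommRing R] (z : R) :
    fpoly (C z) X = X ^ 3 + C (-z ^ 3 + 6 * z ^ 2 - 6 * z - 1) * X ^ 2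
      + C (z ^ 3 - 3 * z ^ 2 + 3 * z + 1) * X + C (-z ^ 3) := by
  simp only [fpoly, map_add, map_sub, map_neg, map_mul, map_pow, map_one, map_ofNat]
  ring

/-- Viewing `f(z,w)` as a (monic cubic) polynomial in `w` over `ℤ[z]` (so below the outer
variable is `w` and the inner variable is `z`),
`Res_w(f(z,w), ∂f/∂w(z,w)) = 3(z³ − 3z² + 1)²(z³ − 6z² + 3z + 1)²`; equivalently, the
discriminant `−Res_w(f, ∂f/∂w)` of `f` as a cubic in `w` equals
`−3(z³ − 3z² + 1)²(z³ − 6z² + 3z + 1)²`. -/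
theorem statement10 :
    _root_.resultant (fpoly (Polynomial.C (Polynomial.X : Polynomial ℤ)) Polynomial.X)
      (Polynomial.derivative (fpoly (Polynomial.C (Polynomial.X : Polynomial ℤ)) Polynomial.X)) =
    3 * ((Polynomial.X : Polynomial ℤ) ^ 3 - 3 * Polynomial.X ^ 2 + 1) ^ 2
      * (Polynomial.X ^ 3 - 6 * Polynomial.X ^ 2 + 3 * Polynomial.X + 1) ^ 2 := by
  rw [fpoly_C_X, resultant_derivative_cubic (by norm_num)]
  ring
end
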